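/- arXiv:2009.02852 — 2 statements merged into one kernel-verified Lean document; each statement's English description precedes it below -/
import Mathlib

section
/- Single-terminal leftover hash bound: let (A,E) have joint pmf P on finite A × E, let f_X : A → {1,…,N} be an ε-almost universal₂ random hash, and set M := f_X(A). Then for any s ∈ (0,1], E_X[exp(s · C_{1+s}(M|E))] ≤ ε^s + N^s · exp(−s H_{1+s}(A|E)), where C_{1+s}(M|E) = log N − H_{1+s}(M|E) and H_{1+s}(A|E) = −(1/s) log Σ_e P_E(e) Σ_a P_{A|E}(a|e)^{1+s}. -/
open Finset


lemma LH_rpow_add_le {x y p : ℝ} (hx : 0 ≤ x) (hy : 0 ≤ y) (hp : 0 ≤ p) (hp1 : p ≤ 1) :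
    (x + y) ^ p ≤ x ^ p + y ^ p := by
  have := NNReal.rpow_add_le_add_rpow ⟨x, hx⟩ ⟨y, hy⟩ hp hp1
  have h2 : ((⟨x, hx⟩ + ⟨y, hy⟩ : NNReal) : ℝ) ^ p ≤ ((⟨x, hx⟩ : NNReal) : ℝ) ^ p + ((⟨y, hy⟩ : NNReal) : ℝ) ^ p := by
    exact_mod_cast this
  exact h2

-- pointwise step: for a fixed hash g
lemma LH_step1 {A : Type*} [Fintype A] [DecidableEq A] {N : ℕ} (g : A → Fin N)
    (q : A → ℝ) (hq : ∀ a, 0 ≤ q a) {s : ℝ} (hs0 : 0 < s) (hs1 : s ≤ 1) :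
    ∑ m : Fin N, (∑ a, if g a = m then q a else 0) ^ (1 + s)
      ≤ ∑ a, q a ^ (1 + s) +
        ∑ a, q a * (∑ a' ∈ univ.erase a, if g a' = g a then q a' else 0) ^ s := by
  set F : Fin N → ℝ := fun m => ∑ a, if g a = m then q a else 0 with hF
  have hF0 : ∀ m, 0 ≤ F m := fun m => Finset.sum_nonneg fun a _ => by
    split
    · exact hq a
    · exact le_rfl
  set R : A → ℝ := fun a => ∑ a' ∈ univ.erase a, if g a' = g a then q a' else 0 with hR
  have hR0 : ∀ a, 0 ≤ R a := fun a => Finset.sum_nonneg fun a' _ => by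
    split
    · exact hq a'
    · exact le_rfl
  have key : ∀ m, F m ^ (1 + s) = ∑ a, (if g a = m then q a else 0) * F m ^ s := by
    intro m
    rw [Real.rpow_add' (hF0 m) (by linarith), Real.rpow_one, ← Finset.sum_mul]
  have collapse : ∑ m : Fin N, F m ^ (1 + s) = ∑ a, q a * F (g a) ^ s := by
    simp_rw [key]
    rw [Finset.sum_comm]
    congr 1; ext a
    rw [Finset.sum_congr rfl (fun m _ => by rw [ite_mul, zero_mul]),
      Finset.sum_ite_eq univ (g a) (fun m => q a * F m ^ s)]
    simp
  have hsplit : ∀ a, F (g a) = q a + R a := by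
    intro a
    rw [hF]
    dsimp only
    rw [← Finset.add_sum_erase univ _ (mem_univ a)]
    simp [hR]
  rw [collapse, ← Finset.sum_add_distrib]
  apply Finset.sum_le_sum
  intro a _
  rw [hsplit a]
  have h1 : (q a + R a) ^ s ≤ q a ^ s + R a ^ s :=
    LH_rpow_add_le (hq a) (hR0 a) hs0.le hs1
  calc q a * (q a + R a) ^ s ≤ q a * (q a ^ s + R a ^ s) :=
        mul_le_mul_of_nonneg_left h1 (hq a)
    _ = q a ^ (1 + s) + q a * R a ^ s := by
        rw [mul_add, Real.rpow_add' (hq a) (by linarith), Real.rpow_one]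

lemma LH_jensen_rpow {X : Type*} [Fintype X] (μ : X → ℝ) (hμ0 : ∀ x, 0 ≤ μ x)
    (hμ1 : ∑ x, μ x = 1) (g : X → ℝ) (hg : ∀ x, 0 ≤ g x) {s : ℝ} (hs0 : 0 ≤ s) (hs1 : s ≤ 1) :
    ∑ x, μ x * g x ^ s ≤ (∑ x, μ x * g x) ^ s := by
  have h := (Real.concaveOn_rpow hs0 hs1).le_map_sum (t := univ) (w := μ) (p := g)
    (fun i _ => hμ0 i) hμ1 (fun i _ => hg i)
  simpa [smul_eq_mul] using h

-- expectation of collision term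
lemma LH_step2 {A X : Type*} [Fintype A] [Fintype X] [DecidableEq A] {N : ℕ} (hN : 0 < N)
    {ε : ℝ} (hε : 0 < ε) (μ : X → ℝ) (hμ0 : ∀ x, 0 ≤ μ x) (hμ1 : ∑ x, μ x = 1)
    (f : X → A → Fin N)
    (hAU : ∀ a₁ a₂ : A, a₁ ≠ a₂ →
      ∑ x, μ x * (if f x a₁ = f x a₂ then 1 else 0) ≤ ε / N)
    (q : A → ℝ) (hq : ∀ a, 0 ≤ q a) (hq1 : ∑ a, q a = 1)
    {s : ℝ} (hs0 : 0 < s) (hs1 : s ≤ 1) (a : A) :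
    ∑ x, μ x * (∑ a' ∈ univ.erase a, if f x a' = f x a then q a' else 0) ^ s ≤ (ε / N) ^ s := by
  set R : X → ℝ := fun x => ∑ a' ∈ univ.erase a, if f x a' = f x a then q a' else 0 with hR
  have hR0 : ∀ x, 0 ≤ R x := fun x => Finset.sum_nonneg fun a' _ => by
    split
    · exact hq a'
    · exact le_rfl
  have hεN : 0 ≤ ε / N := by positivity
  calc ∑ x, μ x * R x ^ s ≤ (∑ x, μ x * R x) ^ s :=
        LH_jensen_rpow μ hμ0 hμ1 R hR0 hs0.le hs1
    _ ≤ (ε / N) ^ s := by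
        apply Real.rpow_le_rpow (Finset.sum_nonneg fun x _ => mul_nonneg (hμ0 x) (hR0 x)) _ hs0.le
        have swap : ∑ x, μ x * R x
            = ∑ a' ∈ univ.erase a, q a' * ∑ x, μ x * (if f x a' = f x a then 1 else 0) := by
          rw [hR]
          simp_rw [Finset.mul_sum]
          rw [Finset.sum_comm]
          refine Finset.sum_congr rfl fun a' _ => Finset.sum_congr rfl fun x _ => ?_
          by_cases h : f x a' = f x a <;> simp [h] <;> ring
        rw [swap]
        calc ∑ a' ∈ univ.erase a, q a' * ∑ x, μ x * (if f x a' = f x a then 1 else 0)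
            ≤ ∑ a' ∈ univ.erase a, q a' * (ε / N) := by
              apply Finset.sum_le_sum
              intro a' ha'
              exact mul_le_mul_of_nonneg_left
                (hAU a' a (Finset.ne_of_mem_erase ha')) (hq a')
          _ = (∑ a' ∈ univ.erase a, q a') * (ε / N) := by rw [Finset.sum_mul]
          _ ≤ 1 * (ε / N) := by
              apply mul_le_mul_of_nonneg_right _ hεN
              rw [← hq1]
              exact Finset.sum_le_sum_of_subset_of_nonneg (Finset.erase_subset a univ)
                (fun a' _ _ => hq a')
          _ = ε / N := one_mul _

lemma LH_core {A E X : Type*} [Fintype A] [Fintype E] [Fintype X] [DecidableEq A]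
    {N : ℕ} (hN : 0 < N) {ε : ℝ} (hε : 0 < ε)
    (P : A × E → ℝ) (hP0 : ∀ p, 0 ≤ P p) (hP1 : ∑ p, P p = 1)
    (μ : X → ℝ) (hμ0 : ∀ x, 0 ≤ μ x) (hμ1 : ∑ x, μ x = 1)
    (f : X → A → Fin N)
    (hAU : ∀ a₁ a₂ : A, a₁ ≠ a₂ →
      ∑ x, μ x * (if f x a₁ = f x a₂ then 1 else 0) ≤ ε / N)
    {s : ℝ} (hs0 : 0 < s) (hs1 : s ≤ 1) :
    ∑ x, μ x * (∑ e, (∑ a, P (a, e)) *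
        ∑ m : Fin N, ((∑ a, if f x a = m then P (a, e) else 0) / ∑ a, P (a, e)) ^ (1 + s))
      ≤ (ε / N) ^ s + ∑ e, (∑ a, P (a, e)) * ∑ a, (P (a, e) / ∑ a', P (a', e)) ^ (1 + s) := by
  set PE : E → ℝ := fun e => ∑ a, P (a, e) with hPE
  have hPE0 : ∀ e, 0 ≤ PE e := fun e => Finset.sum_nonneg fun a _ => hP0 _
  have hPEsum : ∑ e, PE e = 1 := by
    rw [hPE, Finset.sum_comm, ← Fintype.sum_prod_type']
    simpa using hP1
  set W : X → E → ℝ := fun x e =>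
    ∑ m : Fin N, ((∑ a, if f x a = m then P (a, e) else 0) / PE e) ^ (1 + s) with hW
  have swap : ∑ x, μ x * (∑ e, PE e * W x e) = ∑ e, PE e * ∑ x, μ x * W x e := by
    simp_rw [Finset.mul_sum]
    rw [Finset.sum_comm]
    refine Finset.sum_congr rfl fun e _ => Finset.sum_congr rfl fun x _ => by ring
  rw [swap]
  have key : ∀ e, PE e * ∑ x, μ x * W x e
      ≤ PE e * ((ε / N) ^ s + ∑ a, (P (a, e) / PE e) ^ (1 + s)) := by
    intro e
    rcases eq_or_lt_of_le (hPE0 e) with h0 | hpos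
    · rw [← h0, zero_mul, zero_mul]
    · apply mul_le_mul_of_nonneg_left _ (hPE0 e)
      set q : A → ℝ := fun a => P (a, e) / PE e with hq
      have hq0 : ∀ a, 0 ≤ q a := fun a => div_nonneg (hP0 _) (hPE0 e)
      have hq1 : ∑ a, q a = 1 := by
        rw [hq]; dsimp only
        rw [← Finset.sum_div]
        exact div_self hpos.ne'
      have hWq : ∀ x, W x e = ∑ m : Fin N, (∑ a, if f x a = m then q a else 0) ^ (1 + s) := by
        intro x
        refine Finset.sum_congr rfl fun m _ => ?_
        congr 1
        rw [Finset.sum_div]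
        refine Finset.sum_congr rfl fun a _ => ?_
        split <;> simp [hq]
      calc ∑ x, μ x * W x e
          ≤ ∑ x, μ x * (∑ a, q a ^ (1 + s) +
              ∑ a, q a * (∑ a' ∈ univ.erase a, if f x a' = f x a then q a' else 0) ^ s) := by
            refine Finset.sum_le_sum fun x _ => mul_le_mul_of_nonneg_left ?_ (hμ0 x)
            rw [hWq x]
            exact LH_step1 (f x) q hq0 hs0 hs1
        _ = ∑ a, q a ^ (1 + s) + ∑ a, q a *
              ∑ x, μ x * (∑ a' ∈ univ.erase a, if f x a' = f x a then q a' else 0) ^ s := by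
            simp_rw [mul_add, Finset.sum_add_distrib, ← Finset.sum_mul, hμ1, one_mul]
            congr 1
            simp_rw [Finset.mul_sum]
            rw [Finset.sum_comm]
            refine Finset.sum_congr rfl fun a _ => Finset.sum_congr rfl fun x _ => by ring
        _ ≤ ∑ a, q a ^ (1 + s) + ∑ a, q a * (ε / N) ^ s := by
            refine add_le_add_right (Finset.sum_le_sum fun a _ =>
              mul_le_mul_of_nonneg_left ?_ (hq0 a)) _
            exact LH_step2 hN hε μ hμ0 hμ1 f hAU q hq0 hq1 hs0 hs1 a
        _ = (ε / N) ^ s + ∑ a, (P (a, e) / PE e) ^ (1 + s) := by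
            rw [← Finset.sum_mul, hq1, one_mul, add_comm]
  calc ∑ e, PE e * ∑ x, μ x * W x e
      ≤ ∑ e, PE e * ((ε / N) ^ s + ∑ a, (P (a, e) / PE e) ^ (1 + s)) :=
        Finset.sum_le_sum fun e _ => key e
    _ = (ε / N) ^ s + ∑ e, PE e * ∑ a, (P (a, e) / PE e) ^ (1 + s) := by
        simp_rw [mul_add, Finset.sum_add_distrib, ← Finset.sum_mul, hPEsum, one_mul]

/-- Single-terminal leftover hash bound:
`E_X[exp(s·C_{1+s}(M|E))] ≤ ε^s + N^s · exp(−s·H_{1+s}(A|E))`. -/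
theorem leftover_hash_single {A E X : Type*} [Fintype A] [Fintype E] [Fintype X]
    [DecidableEq A]
    (N : ℕ) (hN : 0 < N) (ε : ℝ) (hε : 0 < ε)
    (P : A × E → ℝ) (hP0 : ∀ p, 0 ≤ P p) (hP1 : ∑ p, P p = 1)
    (μ : X → ℝ) (hμ0 : ∀ x, 0 ≤ μ x) (hμ1 : ∑ x, μ x = 1)
    (f : X → A → Fin N)
    (hAU : ∀ a₁ a₂ : A, a₁ ≠ a₂ →
      ∑ x, μ x * (if f x a₁ = f x a₂ then 1 else 0) ≤ ε / N)
    (s : ℝ) (hs0 : 0 < s) (hs1 : s ≤ 1) :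
    ∑ x, μ x * Real.exp (s * (Real.log N -
        (-(1 / s) * Real.log (∑ e, (∑ a, P (a, e)) *
          ∑ m : Fin N,
            ((∑ a, if f x a = m then P (a, e) else 0) / ∑ a, P (a, e)) ^ (1 + s)))))
      ≤ ε ^ s + (N : ℝ) ^ s * Real.exp (-s *
          (-(1 / s) * Real.log (∑ e, (∑ a, P (a, e)) *
            ∑ a, (P (a, e) / ∑ a', P (a', e)) ^ (1 + s)))) := by
  have hNR : (0 : ℝ) < N := Nat.cast_pos.2 hN
  have hsne : s ≠ 0 := hs0.ne'
  have h1s : (0:ℝ) < 1 + s := by linarith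
  have hPE0 : ∀ e : E, 0 ≤ ∑ a, P (a, e) := fun e => Finset.sum_nonneg fun a _ => hP0 _
  have hPEsum : (∑ e : E, ∑ a, P (a, e)) = 1 := by
    rw [Finset.sum_comm, ← Fintype.sum_prod_type']
    simpa using hP1
  obtain ⟨e₀, -, he₀⟩ : ∃ e ∈ univ, (0:ℝ) < ∑ a, P (a, e) := by
    apply Finset.exists_lt_of_sum_lt (f := fun _ => (0:ℝ))
    rw [hPEsum]; simp
  -- positivity of T x
  have hT : ∀ x, (0:ℝ) < ∑ e, (∑ a, P (a, e)) *
      ∑ m : Fin N, ((∑ a, if f x a = m then P (a, e) else 0) / ∑ a, P (a, e)) ^ (1 + s) := by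
    intro x
    have hQ0 : ∀ e (m : Fin N), (0:ℝ) ≤ ∑ a, if f x a = m then P (a, e) else 0 := by
      intro e m
      refine Finset.sum_nonneg fun a _ => ?_
      split
      · exact hP0 _
      · exact le_rfl
    apply Finset.sum_pos' (fun e _ => mul_nonneg (hPE0 e) (Finset.sum_nonneg fun m _ =>
      Real.rpow_nonneg (div_nonneg (hQ0 e m) (hPE0 e)) _))
    refine ⟨e₀, mem_univ _, mul_pos he₀ ?_⟩
    have hQsum : (∑ m : Fin N, ∑ a, if f x a = m then P (a, e₀) else 0) = ∑ a, P (a, e₀) := by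
      rw [Finset.sum_comm]
      refine Finset.sum_congr rfl fun a _ => ?_
      rw [Finset.sum_ite_eq univ (f x a) (fun _ => P (a, e₀))]
      simp
    obtain ⟨m₀, -, hm₀⟩ : ∃ m ∈ univ, (0:ℝ) < ∑ a, if f x a = m then P (a, e₀) else 0 := by
      apply Finset.exists_lt_of_sum_lt (f := fun _ => (0:ℝ))
      rw [hQsum]; simpa using he₀
    exact Finset.sum_pos' (fun m _ => Real.rpow_nonneg (div_nonneg (hQ0 e₀ m) (hPE0 e₀)) _)
      ⟨m₀, mem_univ _, Real.rpow_pos_of_pos (div_pos hm₀ he₀) _⟩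
  -- positivity of S
  have hS : (0:ℝ) < ∑ e, (∑ a, P (a, e)) * ∑ a, (P (a, e) / ∑ a', P (a', e)) ^ (1 + s) := by
    apply Finset.sum_pos' (fun e _ => mul_nonneg (hPE0 e) (Finset.sum_nonneg fun a _ =>
      Real.rpow_nonneg (div_nonneg (hP0 _) (hPE0 e)) _))
    refine ⟨e₀, mem_univ _, mul_pos he₀ ?_⟩
    obtain ⟨a₀, -, ha₀⟩ : ∃ a ∈ univ, (0:ℝ) < P (a, e₀) := by
      apply Finset.exists_lt_of_sum_lt (f := fun _ => (0:ℝ))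
      simpa using he₀
    exact Finset.sum_pos' (fun a _ => Real.rpow_nonneg (div_nonneg (hP0 _) (hPE0 e₀)) _)
      ⟨a₀, mem_univ _, Real.rpow_pos_of_pos (div_pos ha₀ he₀) _⟩
  -- rewrite the exponentials
  have hexpT : ∀ (T : ℝ), 0 < T →
      Real.exp (s * (Real.log N - (-(1 / s) * Real.log T))) = (N:ℝ) ^ s * T := by
    intro T hTpos
    have harg : s * (Real.log N - (-(1 / s) * Real.log T)) = s * Real.log N + Real.log T := by
      field_simp
      ring
    rw [harg, Real.exp_add, Real.exp_log hTpos, Real.rpow_def_of_pos hNR,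
      mul_comm (Real.log _) s]
  have hexpS : ∀ (S : ℝ), 0 < S →
      Real.exp (-s * (-(1 / s) * Real.log S)) = S := by
    intro S hSpos
    have harg : -s * (-(1 / s) * Real.log S) = Real.log S := by
      field_simp
    rw [harg, Real.exp_log hSpos]
  rw [hexpS _ hS]
  have core := LH_core hN hε P hP0 hP1 μ hμ0 hμ1 f hAU hs0 hs1
  calc ∑ x, μ x * Real.exp (s * (Real.log N -
        (-(1 / s) * Real.log (∑ e, (∑ a, P (a, e)) *
          ∑ m : Fin N,
            ((∑ a, if f x a = m then P (a, e) else 0) / ∑ a, P (a, e)) ^ (1 + s)))))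
      = (N:ℝ) ^ s * ∑ x, μ x * (∑ e, (∑ a, P (a, e)) *
          ∑ m : Fin N,
            ((∑ a, if f x a = m then P (a, e) else 0) / ∑ a, P (a, e)) ^ (1 + s)) := by
        rw [Finset.mul_sum]
        refine Finset.sum_congr rfl fun x _ => ?_
        rw [hexpT _ (hT x)]
        ring
    _ ≤ (N:ℝ) ^ s * ((ε / N) ^ s +
          ∑ e, (∑ a, P (a, e)) * ∑ a, (P (a, e) / ∑ a', P (a', e)) ^ (1 + s)) :=
        mul_le_mul_of_nonneg_left core (Real.rpow_nonneg hNR.le _)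
    _ = ε ^ s + (N:ℝ) ^ s *
          ∑ e, (∑ a, P (a, e)) * ∑ a, (P (a, e) / ∑ a', P (a', e)) ^ (1 + s) := by
        rw [mul_add, ← Real.mul_rpow hNR.le (div_nonneg hε.le hNR.le),
          mul_div_cancel₀ _ hNR.ne']
end

section
/- Converse sum-rate secrecy bound: let K_A, K_C, A₃, F be jointly distributed random variables on finite sets, with key alphabets K₁ (for K_A) and K₂ (for K_C). If D(P_{K_A, A₂, A₃, F} ‖ U_{K₁} × P_{A₂, A₃, F}) ≤ δ and D(P_{K_C, A₁, A₃, F} ‖ U_{K₂} × P_{A₁, A₃, F}) ≤ δ, and K_A is a deterministic function of (A₁, F) while K_C is a deterministic function of (A₂, F), then D(P_{K_A, K_C, A₃, F} ‖ U_{K₁} × U_{K₂} × P_{A₃, F}) ≤ 2δ. -/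
open Finset

/-- Distribution (pmf) of a random variable `Y` on a finite probability space. -/
noncomputable def distOf {Ω α : Type*} [Fintype Ω] [Fintype α] [DecidableEq α]
    (μ : Ω → ℝ) (Y : Ω → α) : α → ℝ := fun a => ∑ ω, if Y ω = a then μ ω else 0

/-- KL divergence between two nonnegative functions on a finite set. -/
noncomputable def KL {α : Type*} [Fintype α] (p q : α → ℝ) : ℝ :=
  ∑ a, p a * Real.log (p a / q a)

/-- Pushforward of a nonnegative function along a map. -/
noncomputable def push {α β : Type*} [Fintype α] [DecidableEq β] (f : α → β) (p : α → ℝ) :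
    β → ℝ := fun b => ∑ a, if f a = b then p a else 0

lemma push_nonneg {α β : Type*} [Fintype α] [DecidableEq β] (f : α → β) (p : α → ℝ)
    (hp : ∀ a, 0 ≤ p a) (b : β) : 0 ≤ push f p b :=
  Finset.sum_nonneg fun a _ => by by_cases h : f a = b <;> simp [h, hp a]

lemma le_push {α β : Type*} [Fintype α] [DecidableEq β] (f : α → β) (p : α → ℝ)
    (hp : ∀ a, 0 ≤ p a) (a : α) : p a ≤ push f p (f a) := by
  have := Finset.single_le_sum (f := fun a' => if f a' = f a then p a' else 0)
    (fun i _ => by by_cases h : f i = f a <;> simp [h, hp i]) (Finset.mem_univ a)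
  simpa [push] using this

lemma sum_mul_comp {α β : Type*} [Fintype α] [Fintype β] [DecidableEq β] (f : α → β)
    (p : α → ℝ) (φ : β → ℝ) : ∑ a, p a * φ (f a) = ∑ b, push f p b * φ b := by
  simp only [push, Finset.sum_mul, ite_mul, zero_mul]
  rw [Finset.sum_comm]
  apply Finset.sum_congr rfl
  intro a _
  simp

lemma push_filter {α β : Type*} [Fintype α] [DecidableEq β] (f : α → β) (p : α → ℝ) (b : β) :
    push f p b = ∑ a ∈ Finset.univ.filter (fun a => f a = b), p a := by
  rw [Finset.sum_filter]; rfl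

lemma distOf_nonneg {Ω α : Type*} [Fintype Ω] [Fintype α] [DecidableEq α]
    (μ : Ω → ℝ) (hμ0 : ∀ ω, 0 ≤ μ ω) (Y : Ω → α) (a : α) : 0 ≤ distOf μ Y a :=
  Finset.sum_nonneg fun ω _ => by by_cases h : Y ω = a <;> simp [h, hμ0 ω]

lemma distOf_comp {Ω α β : Type*} [Fintype Ω] [Fintype α] [DecidableEq α]
    [Fintype β] [DecidableEq β] (μ : Ω → ℝ) (Y : Ω → α) (g : α → β) :
    distOf μ (fun ω => g (Y ω)) = push g (distOf μ Y) := by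
  funext b
  simp only [push, distOf]
  have key : ∀ x : α, (if g x = b then ∑ ω, if Y ω = x then μ ω else 0 else 0)
      = ∑ ω, if Y ω = x ∧ g x = b then μ ω else 0 := by
    intro x; split <;> simp_all
  simp only [key]
  rw [Finset.sum_comm]
  apply Finset.sum_congr rfl
  intro ω _
  simp [ite_and]

lemma log_sum_ineq {α : Type*} (s : Finset α) (a b : α → ℝ)
    (ha : ∀ i ∈ s, 0 ≤ a i) (hb : ∀ i ∈ s, 0 ≤ b i)
    (hab : ∀ i ∈ s, 0 < a i → 0 < b i) :
    (∑ i ∈ s, a i) * Real.log ((∑ i ∈ s, a i) / (∑ i ∈ s, b i))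
      ≤ ∑ i ∈ s, a i * Real.log (a i / b i) := by
  set A := ∑ i ∈ s, a i with hA
  set B := ∑ i ∈ s, b i with hB
  rcases eq_or_lt_of_le (Finset.sum_nonneg ha) with h0 | hApos
  · rw [← hA] at h0
    have hz : ∀ i ∈ s, a i = 0 := (Finset.sum_eq_zero_iff_of_nonneg ha).1 h0.symm
    rw [← h0]
    simp only [zero_mul]
    apply Finset.sum_nonneg
    intro i hi; rw [hz i hi]; simp
  · rw [← hA] at hApos
    have hBpos : 0 < B := by
      obtain ⟨i, hi, hai⟩ : ∃ i ∈ s, 0 < a i := by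
        by_contra hc
        push_neg at hc
        have : A ≤ 0 := Finset.sum_nonpos hc
        linarith
      have hbi := hab i hi hai
      calc (0:ℝ) < b i := hbi
        _ ≤ B := Finset.single_le_sum hb hi
    have key : ∀ i ∈ s, a i * Real.log (A/B) + (a i - b i * (A/B)) ≤ a i * Real.log (a i / b i) := by
      intro i hi
      rcases eq_or_lt_of_le (ha i hi) with h0 | hai
      · rw [← h0]
        have : 0 ≤ b i * (A/B) := by
          have := hb i hi; positivity
        simp only [zero_mul, zero_add, zero_sub]
        linarith
      · have hbi := hab i hi hai
        set t := (a i / b i) * (B / A) with htdef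
        have ht : 0 < t := by positivity
        have hlog : 1 - t⁻¹ ≤ Real.log t := by
          have := Real.log_le_sub_one_of_pos (x := t⁻¹) (by positivity)
          rw [Real.log_inv] at this
          linarith
        have hsplit : Real.log (a i / b i) = Real.log t + Real.log (A / B) := by
          rw [← Real.log_mul (by positivity) (by positivity)]
          congr 1
          rw [htdef]
          field_simp
        have hat : a i * t⁻¹ = b i * (A / B) := by
          rw [htdef]
          field_simp
        have hmul : a i * (1 - t⁻¹) ≤ a i * Real.log t :=
          mul_le_mul_of_nonneg_left hlog (le_of_lt hai)
        rw [mul_sub, mul_one, hat] at hmul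
        rw [hsplit, mul_add]
        linarith
    calc A * Real.log (A/B) = ∑ i ∈ s, (a i * Real.log (A/B) + (a i - b i * (A/B))) := by
          rw [Finset.sum_add_distrib, ← Finset.sum_mul, Finset.sum_sub_distrib, ← Finset.sum_mul]
          rw [← hA, ← hB]
          field_simp
          ring
      _ ≤ ∑ i ∈ s, a i * Real.log (a i / b i) := Finset.sum_le_sum key

/-- Data-processing inequality for KL divergence under deterministic maps. -/
lemma KL_push_le {α β : Type*} [Fintype α] [Fintype β] [DecidableEq β] (f : α → β)
    (p q : α → ℝ) (hp : ∀ a, 0 ≤ p a) (hq : ∀ a, 0 ≤ q a)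
    (hab : ∀ a, 0 < p a → 0 < q a) :
    KL (push f p) (push f q) ≤ KL p q := by
  unfold KL
  rw [← Finset.sum_fiberwise_of_maps_to (g := f) (t := Finset.univ)
    (fun a _ => Finset.mem_univ (f a)) (fun a => p a * Real.log (p a / q a))]
  apply Finset.sum_le_sum
  intro b _
  rw [push_filter, push_filter]
  exact log_sum_ineq _ p q (fun i _ => hp i) (fun i _ => hq i) (fun i _ => hab i)

lemma push_prodMap {K W B : Type*} [Fintype K] [DecidableEq K] [Fintype W]
    [Fintype B] [DecidableEq B] (h : W → B) (c : ℝ) (m : W → ℝ) :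
    push (Prod.map (id : K → K) h) (fun x => c * m x.2)
      = fun y => c * push h m y.2 := by
  funext y
  obtain ⟨k, b⟩ := y
  simp only [push, Fintype.sum_prod_type, Prod.map, id_eq, Prod.mk.injEq, ite_and,
    Finset.mul_sum]
  rw [Finset.sum_comm]
  apply Finset.sum_congr rfl
  intro w _
  simp [eq_comm]
/-- Converse sum-rate secrecy bound: if each key is individually almost uniform
and independent of the other sources and the public message, and each key is a
deterministic function of its terminal's source and the public message, then the
pair of keys is jointly `2δ`-close to uniform and independent of `(A₃, F)`. -/
theorem converse_sum_rate_secrecy {Ω 𝒦₁ 𝒦₂ 𝒜₁ 𝒜₂ 𝒜₃ ℱ : Type*}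
    [Fintype Ω] [Fintype 𝒦₁] [Fintype 𝒦₂] [Fintype 𝒜₁] [Fintype 𝒜₂] [Fintype 𝒜₃]
    [Fintype ℱ] [DecidableEq 𝒦₁] [DecidableEq 𝒦₂] [DecidableEq 𝒜₁] [DecidableEq 𝒜₂]
    [DecidableEq 𝒜₃] [DecidableEq ℱ]
    (μ : Ω → ℝ) (hμ0 : ∀ ω, 0 ≤ μ ω) (hμ1 : ∑ ω, μ ω = 1)
    (KA : Ω → 𝒦₁) (KC : Ω → 𝒦₂) (A₁ : Ω → 𝒜₁) (A₂ : Ω → 𝒜₂) (A₃ : Ω → 𝒜₃) (F : Ω → ℱ)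
    (g₁ : 𝒜₁ × ℱ → 𝒦₁) (g₂ : 𝒜₂ × ℱ → 𝒦₂)
    (hKA : ∀ ω, KA ω = g₁ (A₁ ω, F ω)) (hKC : ∀ ω, KC ω = g₂ (A₂ ω, F ω))
    (δ : ℝ) (hδ : 0 ≤ δ)
    (h₁ : KL (distOf μ (fun ω => (KA ω, A₂ ω, A₃ ω, F ω)))
        (fun p => ((Fintype.card 𝒦₁ : ℝ))⁻¹ *
          distOf μ (fun ω => (A₂ ω, A₃ ω, F ω)) p.2) ≤ δ)
    (h₂ : KL (distOf μ (fun ω => (KC ω, A₁ ω, A₃ ω, F ω)))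
        (fun p => ((Fintype.card 𝒦₂ : ℝ))⁻¹ *
          distOf μ (fun ω => (A₁ ω, A₃ ω, F ω)) p.2) ≤ δ) :
    KL (distOf μ (fun ω => (KA ω, KC ω, A₃ ω, F ω)))
        (fun p => ((Fintype.card 𝒦₁ : ℝ))⁻¹ * (((Fintype.card 𝒦₂ : ℝ))⁻¹ *
          distOf μ (fun ω => (A₃ ω, F ω)) p.2.2)) ≤ 2 * δ := by
  -- nonemptiness
  have hΩ : Nonempty Ω := by
    rcases isEmpty_or_nonempty Ω with h | h
    · rw [Finset.univ_eq_empty, Finset.sum_empty] at hμ1; norm_num at hμ1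
    · exact h
  obtain ⟨ω₀⟩ := hΩ
  have hK1ne : Nonempty 𝒦₁ := ⟨KA ω₀⟩
  have hK2ne : Nonempty 𝒦₂ := ⟨KC ω₀⟩
  have hc1pos : (0:ℝ) < ((Fintype.card 𝒦₁ : ℝ))⁻¹ := by
    have : (0:ℝ) < (Fintype.card 𝒦₁ : ℝ) := by exact_mod_cast Fintype.card_pos
    positivity
  have hc2pos : (0:ℝ) < ((Fintype.card 𝒦₂ : ℝ))⁻¹ := by
    have : (0:ℝ) < (Fintype.card 𝒦₂ : ℝ) := by exact_mod_cast Fintype.card_pos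
    positivity
  set c1 : ℝ := ((Fintype.card 𝒦₁ : ℝ))⁻¹ with hc1
  set c2 : ℝ := ((Fintype.card 𝒦₂ : ℝ))⁻¹ with hc2
  set p3 : 𝒦₁ × 𝒦₂ × 𝒜₃ × ℱ → ℝ := distOf μ (fun ω => (KA ω, KC ω, A₃ ω, F ω)) with hp3
  set r : 𝒦₂ × 𝒜₃ × ℱ → ℝ := distOf μ (fun ω => (KC ω, A₃ ω, F ω)) with hrdef
  set q : 𝒜₃ × ℱ → ℝ := distOf μ (fun ω => (A₃ ω, F ω)) with hqdef
  have hp3nn : ∀ x, 0 ≤ p3 x := distOf_nonneg μ hμ0 _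
  have hrnn : ∀ y, 0 ≤ r y := distOf_nonneg μ hμ0 _
  have hqnn : ∀ z, 0 ≤ q z := distOf_nonneg μ hμ0 _
  -- marginal relations
  have hrp : r = push (fun x : 𝒦₁ × 𝒦₂ × 𝒜₃ × ℱ => x.2) p3 := by
    rw [hrdef, hp3]
    exact distOf_comp μ (fun ω => (KA ω, KC ω, A₃ ω, F ω)) (fun x => x.2)
  have hqr : q = push (fun y : 𝒦₂ × 𝒜₃ × ℱ => y.2) r := by
    rw [hqdef, hrdef]
    exact distOf_comp μ (fun ω => (KC ω, A₃ ω, F ω)) (fun y => y.2)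
  have hrx : ∀ x, 0 < p3 x → 0 < r x.2 := fun x hx =>
    lt_of_lt_of_le hx (by rw [hrp]; exact le_push _ p3 hp3nn x)
  have hqx : ∀ y, 0 < r y → 0 < q y.2 := fun y hy =>
    lt_of_lt_of_le hy (by rw [hqr]; exact le_push _ r hrnn y)
  -- chain rule identity
  have hsum2 : ∀ φ : 𝒦₂ × 𝒜₃ × ℱ → ℝ,
      ∑ x : 𝒦₁ × 𝒦₂ × 𝒜₃ × ℱ, p3 x * φ x.2 = ∑ y, r y * φ y := by
    intro φ
    calc ∑ x : 𝒦₁ × 𝒦₂ × 𝒜₃ × ℱ, p3 x * φ x.2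
        = ∑ y, push (fun x : 𝒦₁ × 𝒦₂ × 𝒜₃ × ℱ => x.2) p3 y * φ y :=
          sum_mul_comp (fun x => x.2) p3 φ
      _ = ∑ y, r y * φ y := by rw [← hrp]
  have chain : KL p3 (fun x => c1 * (c2 * q x.2.2))
      = KL p3 (fun x => c1 * r x.2) + KL r (fun y => c2 * q y.2) := by
    unfold KL
    rw [← hsum2 (fun y => Real.log (r y / (c2 * q y.2))), ← Finset.sum_add_distrib]
    apply Finset.sum_congr rfl
    intro x _
    rcases eq_or_lt_of_le (hp3nn x) with h0 | hx
    · rw [← h0]; ring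
    · have hr2 : 0 < r x.2 := hrx x hx
      have hq2 : 0 < q x.2.2 := hqx x.2 hr2
      rw [show p3 x / (c1 * (c2 * q x.2.2))
          = (p3 x / (c1 * r x.2)) * (r x.2 / (c2 * q x.2.2)) by field_simp]
      rw [Real.log_mul (by positivity) (by positivity)]
      ring
  -- DPI 1
  have dpi1 : KL p3 (fun x => c1 * r x.2) ≤ δ := by
    set h : 𝒜₂ × 𝒜₃ × ℱ → 𝒦₂ × 𝒜₃ × ℱ := fun w => (g₂ (w.1, w.2.2), w.2) with hh
    have hpA : ∀ a, 0 ≤ distOf μ (fun ω => (KA ω, A₂ ω, A₃ ω, F ω)) a :=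
      distOf_nonneg μ hμ0 _
    have hmA : distOf μ (fun ω => (A₂ ω, A₃ ω, F ω))
        = push (fun x : 𝒦₁ × 𝒜₂ × 𝒜₃ × ℱ => x.2) (distOf μ (fun ω => (KA ω, A₂ ω, A₃ ω, F ω))) :=
      distOf_comp μ (fun ω => (KA ω, A₂ ω, A₃ ω, F ω)) (fun x => x.2)
    have habs : ∀ x, 0 < distOf μ (fun ω => (KA ω, A₂ ω, A₃ ω, F ω)) x →
        0 < c1 * distOf μ (fun ω => (A₂ ω, A₃ ω, F ω)) x.2 := by
      intro x hx
      have : 0 < distOf μ (fun ω => (A₂ ω, A₃ ω, F ω)) x.2 :=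
        lt_of_lt_of_le hx (by rw [hmA]; exact le_push _ _ hpA x)
      positivity
    have e1 : push (Prod.map id h) (distOf μ (fun ω => (KA ω, A₂ ω, A₃ ω, F ω))) = p3 := by
      rw [hp3, ← distOf_comp]
      exact congrArg (distOf μ) (funext fun ω => by simp [hh, Prod.map, hKC ω])
    have e2 : push (Prod.map id h)
        (fun x : 𝒦₁ × 𝒜₂ × 𝒜₃ × ℱ => c1 * distOf μ (fun ω => (A₂ ω, A₃ ω, F ω)) x.2)
        = fun y : 𝒦₁ × 𝒦₂ × 𝒜₃ × ℱ => c1 * r y.2 := by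
      rw [push_prodMap h c1 (distOf μ (fun ω => (A₂ ω, A₃ ω, F ω)))]
      have : push h (distOf μ (fun ω => (A₂ ω, A₃ ω, F ω))) = r := by
        rw [hrdef, ← distOf_comp]
        exact congrArg (distOf μ) (funext fun ω => by simp [hh, hKC ω])
      rw [this]
    have := KL_push_le (Prod.map id h) (distOf μ (fun ω => (KA ω, A₂ ω, A₃ ω, F ω)))
      (fun x => c1 * distOf μ (fun ω => (A₂ ω, A₃ ω, F ω)) x.2) hpA
      (fun x => by have := distOf_nonneg μ hμ0 (fun ω => (A₂ ω, A₃ ω, F ω)) x.2; positivity)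
      habs
    rw [e1, e2] at this
    exact le_trans this h₁
  -- DPI 2
  have dpi2 : KL r (fun y => c2 * q y.2) ≤ δ := by
    set h : 𝒜₁ × 𝒜₃ × ℱ → 𝒜₃ × ℱ := fun w => w.2 with hh
    have hpC : ∀ a, 0 ≤ distOf μ (fun ω => (KC ω, A₁ ω, A₃ ω, F ω)) a :=
      distOf_nonneg μ hμ0 _
    have hmC : distOf μ (fun ω => (A₁ ω, A₃ ω, F ω))
        = push (fun x : 𝒦₂ × 𝒜₁ × 𝒜₃ × ℱ => x.2) (distOf μ (fun ω => (KC ω, A₁ ω, A₃ ω, F ω))) :=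
      distOf_comp μ (fun ω => (KC ω, A₁ ω, A₃ ω, F ω)) (fun x => x.2)
    have habs : ∀ x, 0 < distOf μ (fun ω => (KC ω, A₁ ω, A₃ ω, F ω)) x →
        0 < c2 * distOf μ (fun ω => (A₁ ω, A₃ ω, F ω)) x.2 := by
      intro x hx
      have : 0 < distOf μ (fun ω => (A₁ ω, A₃ ω, F ω)) x.2 :=
        lt_of_lt_of_le hx (by rw [hmC]; exact le_push _ _ hpC x)
      positivity
    have e1 : push (Prod.map id h) (distOf μ (fun ω => (KC ω, A₁ ω, A₃ ω, F ω))) = r := by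
      rw [hrdef, ← distOf_comp]
      exact congrArg (distOf μ) (funext fun ω => by simp [hh, Prod.map])
    have e2 : push (Prod.map id h)
        (fun x : 𝒦₂ × 𝒜₁ × 𝒜₃ × ℱ => c2 * distOf μ (fun ω => (A₁ ω, A₃ ω, F ω)) x.2)
        = fun y : 𝒦₂ × 𝒜₃ × ℱ => c2 * q y.2 := by
      rw [push_prodMap h c2 (distOf μ (fun ω => (A₁ ω, A₃ ω, F ω)))]
      have : push h (distOf μ (fun ω => (A₁ ω, A₃ ω, F ω))) = q := by
        rw [hqdef, ← distOf_comp]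
      rw [this]
    have := KL_push_le (Prod.map id h) (distOf μ (fun ω => (KC ω, A₁ ω, A₃ ω, F ω)))
      (fun x => c2 * distOf μ (fun ω => (A₁ ω, A₃ ω, F ω)) x.2) hpC
      (fun x => by have := distOf_nonneg μ hμ0 (fun ω => (A₁ ω, A₃ ω, F ω)) x.2; positivity)
      habs
    rw [e1, e2] at this
    exact le_trans this h₂
  calc KL p3 (fun x => c1 * (c2 * q x.2.2))
      = KL p3 (fun x => c1 * r x.2) + KL r (fun y => c2 * q y.2) := chain
    _ ≤ δ + δ := add_le_add dpi1 dpi2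
    _ = 2 * δ := by ring
end
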